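/- Let M be a finitely generated B-module with compatible G-action such that M is generated as a B-module by its invariants M^G (equivalently, the counit map B ⊗_A M^G → M, b ⊗ m ↦ b • m, is surjective). Then M^G is a finitely generated A-module. -/

import Mathlib

/-!
Pick finitely many invariant `B`-generators `tᵢ` of `M`, which exist because `M` is finite and
spanned by invariants. An invariant `m = ∑ bᵢ • tᵢ` equals its Reynolds average
`|G|⁻¹ • ∑_g g • m = ∑ (|G|⁻¹ * ∑_g g • bᵢ) • tᵢ`, whose coefficients lie in `A = B^G`;
so the `tᵢ` also generate `M^G` over `A`.
-/

/-- The subring of `G`-invariant elements of `B`. -/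
def fixedSubring (G B : Type*) [Group G] [CommRing B] [MulSemiringAction G B] : Subring B where
  carrier := {b | ∀ g : G, g • b = b}
  mul_mem' := by intro a b ha hb g; rw [smul_mul', ha, hb]
  one_mem' := fun g => smul_one g
  add_mem' := by intro a b ha hb g; rw [smul_add, ha, hb]
  zero_mem' := fun g => smul_zero g
  neg_mem' := by intro a ha g; rw [smul_neg, ha]

/-- A `B`-module `M` with a compatible `G`-action: `G` acts on `M` by additive
automorphisms and `g • (b • m) = (g • b) • (g • m)`. -/
class CompatibleAction (G B M : Type*) [Group G] [CommRing B] [MulSemiringAction G B]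
    [AddCommGroup M] [Module B M] extends DistribMulAction G M where
  smul_smul_comm : ∀ (g : G) (b : B) (m : M), g • (b • m) = (g • b) • (g • m)

/-- The invariants `M^G`, as a module over the invariant subring `A = B^G`. -/
def invariantSubmodule (G B M : Type*) [Group G] [CommRing B] [MulSemiringAction G B]
    [AddCommGroup M] [Module B M] [CompatibleAction G B M] :
    Submodule (fixedSubring G B) M where
  carrier := {m | ∀ g : G, g • m = m}
  add_mem' := by intro m m' hm hm' g; rw [smul_add, hm g, hm' g]
  zero_mem' := fun g => smul_zero g
  smul_mem' := by
    intro a m hm g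
    rw [Subring.smul_def, CompatibleAction.smul_smul_comm g (a : B) m, hm g, a.2 g]

open Submodule

theorem smul_sum_smul {G M : Type*} [Group G] [Fintype G] [AddCommMonoid M]
    [DistribMulAction G M] (h : G) (x : M) : h • ∑ g : G, g • x = ∑ g : G, g • x := by
  simp only [Finset.smul_sum, smul_smul]
  exact Fintype.sum_equiv (Equiv.mulLeft h) _ _ fun _ => rfl

theorem sum_smul_eq_card_smul {G M : Type*} [Group G] [Fintype G] [AddCommMonoid M]
    [DistribMulAction G M] {x : M} (hx : ∀ g : G, g • x = x) :
    ∑ g : G, g • x = Fintype.card G • x := by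
  simp only [hx, Finset.sum_const, Finset.card_univ]

theorem smul_invOf_eq_invOf {G B : Type*} [Group G] [CommRing B] [MulSemiringAction G B]
    {g : G} {b : B} [Invertible b] (hb : g • b = b) : g • ⅟b = ⅟b :=
  (invOf_eq_right_inv <| calc
    b * g • ⅟b = g • b * g • ⅟b := by rw [hb]
    _ = 1 := by rw [← smul_mul', mul_invOf_self, smul_one]).symm

namespace fixedSubring

variable {G B : Type*} [Group G] [Fintype G] [CommRing B] [MulSemiringAction G B]

theorem sum_smul_mem (b : B) : ∑ g : G, g • b ∈ fixedSubring G B :=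
  fun h => smul_sum_smul h b

theorem invOf_card_mem [Invertible (Fintype.card G : B)] :
    ⅟(Fintype.card G : B) ∈ fixedSubring G B :=
  fun _ => smul_invOf_eq_invOf (map_natCast (MulSemiringAction.toRingHom G B _) _)

end fixedSubring

section Averaging

variable {G B M : Type*} [Group G] [Fintype G] [CommRing B] [MulSemiringAction G B]
  [AddCommGroup M] [Module B M] [DistribMulAction G M] [SMulDistribClass G B M]

theorem sum_smul_mem_span_fixedSubring {T : Set M} (hT : ∀ t ∈ T, ∀ g : G, g • t = t) {x : M}
    (hx : x ∈ span B T) : ∑ g : G, g • x ∈ span (fixedSubring G B) T := by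
  obtain ⟨f, t, htT, -, rfl⟩ := mem_span_iff_exists_finset_subset.1 hx
  have hsum : ∑ g : G, g • ∑ i ∈ t, f i • i = ∑ i ∈ t, (∑ g : G, g • f i) • i := by
    simp only [Finset.smul_sum, smul_distrib_smul, Finset.sum_smul]
    rw [Finset.sum_comm]
    refine Finset.sum_congr rfl fun i hi => Finset.sum_congr rfl fun g _ => ?_
    rw [hT i (htT hi) g]
  rw [hsum]
  exact sum_mem fun i hi =>
    smul_mem _ (⟨_, fixedSubring.sum_smul_mem (f i)⟩ : fixedSubring G B) (subset_span (htT hi))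

theorem mem_span_fixedSubring_of_mem_span [Invertible (Fintype.card G : B)] {T : Set M}
    (hT : ∀ t ∈ T, ∀ g : G, g • t = t) {m : M} (hm : ∀ g : G, g • m = m)
    (hmT : m ∈ span B T) : m ∈ span (fixedSubring G B) T := by
  have hm_avg : m = ⅟(Fintype.card G : B) • ∑ g : G, g • m := by
    rw [sum_smul_eq_card_smul hm, ← Nat.cast_smul_eq_nsmul B, smul_smul, invOf_mul_self, one_smul]
  rw [hm_avg]
  exact smul_mem _ (⟨_, fixedSubring.invOf_card_mem⟩ : fixedSubring G B)
    (sum_smul_mem_span_fixedSubring hT hmT)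

end Averaging

instance CompatibleAction.smulDistribClass {G B M : Type*} [Group G] [CommRing B]
    [MulSemiringAction G B] [AddCommGroup M] [Module B M] [CompatibleAction G B M] :
    SMulDistribClass G B M :=
  ⟨CompatibleAction.smul_smul_comm⟩

/-- If a finitely generated `B`-module `M` with compatible `G`-action is generated as a
`B`-module by its invariants `M^G`, then `M^G` is a finitely generated module over
`A = B^G`. -/
theorem invariants_fg_of_generated_by_invariants
    {G B M : Type*} [Group G] [Fintype G] [CommRing B] [MulSemiringAction G B]
    [AddCommGroup M] [Module B M] [CompatibleAction G B M]
    (hcard : Invertible (Fintype.card G : B))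
    (hfg : Module.Finite B M)
    (hgen : Submodule.span B {m : M | ∀ g : G, g • m = m} = ⊤) :
    (invariantSubmodule G B M).FG := by
  obtain ⟨T, hT, hTspan⟩ := (fg_span_iff_fg_span_finset_subset _).1 (hgen ▸ hfg.fg_top)
  refine ⟨T, le_antisymm (span_le.2 hT) fun m hm => ?_⟩
  exact mem_span_fixedSubring_of_mem_span (fun t ht => hT ht) hm (hTspan ▸ hgen ▸ mem_top)
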